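/- arXiv:2201.13387 — 2 statements merged into one kernel-verified Lean document; each statement's English description precedes it below -/
import Mathlib

section
/- Suppose each f_i is convex and L_i-smooth, F is L_F-smooth, and x* is a global minimizer of F (so ∇F(x*) = 0). Let p be a probability vector with positive entries, x, w ∈ ℝ^d, and g_i = (1/(n p_i))(∇f_i(x) − ∇f_i(w)) + ∇F(w). Then ∑_{i=1}^n p_i ‖g_i‖² ≤ 4L̄(F(x) − F(x*)) + 2L_F(F(x) − F(x*)) + 2L̄·D(w) + V_e(p; x, w) − V_e(p^IS; x, w), where D(w) = (1/n)∑_{i=1}^n (1/L_i)‖∇f_i(w) − ∇f_i(x*)‖². -/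
/-!
Expanding the square, the second moment equals `V_e(p) + ‖∇F(x)‖² - ‖∇F(x) - ∇F(w)‖²`.
A gradient step of length `1 / L_F` from `x` bounds `‖∇F(x)‖²` by `2 L_F (F(x) - F(x*))`.
The same bound, applied to `f_i` tilted by `⟪∇f_i(x*), ·⟫` (convexity makes `x*` its minimizer)
and averaged using `∇F(x*) = 0`, gives `(1/n) ∑ ‖∇f_i(x) - ∇f_i(x*)‖² / L_i ≤ 2 (F(x) - F(x*))`.
Finally `V_e(p^IS) = L̄ (1/n) ∑ ‖∇f_i(x) - ∇f_i(w)‖² / L_i`, and passing through `∇f_i(x*)`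
splits this into the previous quantity and `D(w)`.
-/

open MeasureTheory Finset
open scoped RealInnerProductSpace BigOperators

abbrev Euc (d : ℕ) := EuclideanSpace ℝ (Fin d)

/-- The finite-sum objective `F(x) = (1/n) ∑ f i x`. -/
noncomputable def avgF {d : ℕ} (n : ℕ) (f : Fin n → Euc d → ℝ) (x : Euc d) : ℝ :=
  (1 / (n : ℝ)) * ∑ i, f i x

/-- The gradient of the finite-sum objective, `∇F(x) = (1/n) ∑ ∇f i x`. -/
noncomputable def avgG {d : ℕ} (n : ℕ) (f' : Fin n → Euc d → Euc d) (x : Euc d) : Euc d :=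
  (1 / (n : ℝ)) • ∑ i, f' i x

/-- The effective sampling variance `V_e(q; x, w)`. -/
noncomputable def Ve {d : ℕ} (n : ℕ) (f' : Fin n → Euc d → Euc d)
    (q : Fin n → ℝ) (x w : Euc d) : ℝ :=
  (1 / (n : ℝ) ^ 2) * ∑ i, (1 / q i) * ‖f' i x - f' i w‖ ^ 2

/-- The average smoothness constant `L̄ = (1/n) ∑ L i`. -/
noncomputable def Lbar (n : ℕ) (L : Fin n → ℝ) : ℝ := (1 / (n : ℝ)) * ∑ i, L i

/-- The importance sampling distribution `p^IS_i = L i / (n L̄)`. -/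
noncomputable def pIS (n : ℕ) (L : Fin n → ℝ) (i : Fin n) : ℝ :=
  L i / ((n : ℝ) * Lbar n L)

/-- `D(w) = (1/n) ∑ (1 / L i) ‖∇f i w - ∇f i x*‖²`. -/
noncomputable def Dfun {d : ℕ} (n : ℕ) (f' : Fin n → Euc d → Euc d) (L : Fin n → ℝ)
    (xstar w : Euc d) : ℝ :=
  (1 / (n : ℝ)) * ∑ i, (1 / L i) * ‖f' i w - f' i xstar‖ ^ 2

section InnerProductSpace

variable {E : Type*} [NormedAddCommGroup E] [InnerProductSpace ℝ E]

theorem sum_mul_norm_sq_inv_mul_smul_add {ι : Type*} [Fintype ι] (N : ℝ) {p : ι → ℝ}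
    (hp : ∀ i, p i ≠ 0) (hp1 : ∑ i, p i = 1) (u : ι → E) (c : E) :
    ∑ i, p i * ‖(1 / (N * p i)) • u i + c‖ ^ 2 =
      1 / N ^ 2 * ∑ i, 1 / p i * ‖u i‖ ^ 2 + 2 * ⟪(1 / N) • ∑ i, u i, c⟫ + ‖c‖ ^ 2 := by
  have hterm : ∀ i, p i * ‖(1 / (N * p i)) • u i + c‖ ^ 2 =
      1 / N ^ 2 * (1 / p i * ‖u i‖ ^ 2) + 2 * (1 / N) * ⟪u i, c⟫ + p i * ‖c‖ ^ 2 := by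
    intro i
    have hpN : p i * (1 / (N * p i)) = 1 / N := by field_simp [hp i]
    rw [norm_add_sq_real, norm_smul, real_inner_smul_left, mul_pow, Real.norm_eq_abs, sq_abs]
    linear_combination (1 / (N * p i) * ‖u i‖ ^ 2 + 2 * ⟪u i, c⟫) * hpN
  simp only [hterm, sum_add_distrib, ← mul_sum, ← sum_mul, hp1, real_inner_smul_left, sum_inner]
  ring

variable [CompleteSpace E] {φ : E → ℝ} {g : E → E}

theorem IsLocalMin.hasGradientAt_eq_zero {a g' : E} (h : IsLocalMin φ a)
    (hg : HasGradientAt φ g' a) : g' = 0 :=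
  (InnerProductSpace.toDual ℝ E).map_eq_zero_iff.1 (h.hasFDerivAt_eq_zero hg.hasFDerivAt)

theorem HasGradientAt.hasDerivAt_comp_add_smul {x v g' : E} {t : ℝ}
    (h : HasGradientAt φ g' (x + t • v)) :
    HasDerivAt (fun s : ℝ => φ (x + s • v)) ⟪g', v⟫ t := by
  have hline : HasDerivAt (fun s : ℝ => x + s • v) v t := by
    simpa using ((hasDerivAt_id t).smul_const v).const_add x
  have hcomp := h.hasFDerivAt.comp_hasDerivAt t hline
  simp only [InnerProductSpace.toDual_apply_apply] at hcomp
  exact hcomp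

theorem quadratic_upper_bound_of_lipschitz_gradient (hg : ∀ z, HasGradientAt φ (g z) z) {C : ℝ}
    (hlip : ∀ a b, ‖g a - g b‖ ≤ C * ‖a - b‖) (x y : E) :
    φ y ≤ φ x + ⟪g x, y - x⟫ + C / 2 * ‖y - x‖ ^ 2 := by
  set v := y - x
  set h : ℝ → ℝ := fun t => φ (x + t • v) - t * ⟪g x, v⟫ - C / 2 * ‖v‖ ^ 2 * t ^ 2
  have hderiv : ∀ t, HasDerivAt h (⟪g (x + t • v) - g x, v⟫ - C * ‖v‖ ^ 2 * t) t := by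
    intro t
    refine ((((hg (x + t • v)).hasDerivAt_comp_add_smul).sub
      ((hasDerivAt_id t).mul_const ⟪g x, v⟫)).sub
      ((hasDerivAt_pow 2 t).const_mul (C / 2 * ‖v‖ ^ 2))).congr_deriv ?_
    simp only [inner_sub_left, Nat.cast_ofNat]
    ring
  have hslope : ∀ t ∈ interior (Set.Icc (0 : ℝ) 1),
      ⟪g (x + t • v) - g x, v⟫ - C * ‖v‖ ^ 2 * t ≤ 0 := by
    intro t ht
    rw [interior_Icc] at ht
    have hnorm : ‖g (x + t • v) - g x‖ ≤ C * (t * ‖v‖) := by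
      simpa [norm_smul, abs_of_pos ht.1] using hlip (x + t • v) x
    nlinarith [real_inner_le_norm (g (x + t • v) - g x) v, norm_nonneg v]
  have hanti : AntitoneOn h (Set.Icc 0 1) :=
    antitoneOn_of_hasDerivWithinAt_nonpos (convex_Icc 0 1)
      (fun t _ => (hderiv t).continuousAt.continuousWithinAt)
      (fun t _ => (hderiv t).hasDerivWithinAt) hslope
  have h10 := hanti (Set.left_mem_Icc.2 zero_le_one) (Set.right_mem_Icc.2 zero_le_one) zero_le_one
  simp only [h, v, one_smul, zero_smul, add_zero, add_sub_cancel] at h10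
  linarith

theorem norm_gradient_sq_le_of_forall_le (hg : ∀ z, HasGradientAt φ (g z) z) {C : ℝ}
    (hlip : ∀ a b, ‖g a - g b‖ ≤ C * ‖a - b‖) {x₀ : E} (hmin : ∀ y, φ x₀ ≤ φ y) (x : E) :
    ‖g x‖ ^ 2 ≤ 2 * C * (φ x - φ x₀) := by
  rcases lt_or_ge 0 C with hC | hC
  · -- one gradient step of length `1 / C` from `x`
    have hstep := quadratic_upper_bound_of_lipschitz_gradient hg hlip x (x - C⁻¹ • g x)
    rw [sub_sub_cancel_left, inner_neg_right, norm_neg, real_inner_smul_right,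
      real_inner_self_eq_norm_sq, norm_smul, mul_pow, Real.norm_eq_abs, sq_abs] at hstep
    have hhalf : C / 2 * (C⁻¹ ^ 2 * ‖g x‖ ^ 2) = C⁻¹ * ‖g x‖ ^ 2 / 2 := by
      field_simp
    have hdrop : C⁻¹ * ‖g x‖ ^ 2 / 2 ≤ φ x - φ x₀ := by
      linarith [hmin (x - C⁻¹ • g x)]
    calc ‖g x‖ ^ 2 = 2 * C * (C⁻¹ * ‖g x‖ ^ 2 / 2) := by field_simp
      _ ≤ 2 * C * (φ x - φ x₀) := by gcongr
  · -- the bound forces `g x = g x₀ = 0`, and `C = 0` or `x = x₀`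
    have hg₀ : g x₀ = 0 :=
      IsLocalMin.hasGradientAt_eq_zero (Filter.Eventually.of_forall hmin) (hg x₀)
    have hx := hlip x x₀
    rw [hg₀, sub_zero] at hx
    have hCx : C * ‖x - x₀‖ = 0 :=
      le_antisymm (mul_nonpos_of_nonpos_of_nonneg hC (norm_nonneg _)) ((norm_nonneg _).trans hx)
    rw [hCx, norm_le_zero_iff] at hx
    rw [hx]
    rcases mul_eq_zero.1 hCx with hC0 | hxx
    · simp [hC0]
    · simp [sub_eq_zero.1 (norm_eq_zero.1 hxx)]

theorem norm_sub_gradient_sq_le_of_convex (hg : ∀ z, HasGradientAt φ (g z) z)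
    (hconv : ∀ a b, φ a + ⟪g a, b - a⟫ ≤ φ b) {C : ℝ}
    (hlip : ∀ a b, ‖g a - g b‖ ≤ C * ‖a - b‖) (x y : E) :
    ‖g x - g y‖ ^ 2 ≤ 2 * C * (φ x - φ y - ⟪g y, x - y⟫) := by
  -- tilting `φ` by the linear form `⟪g y, ·⟫` makes `y` a global minimizer
  have htilt_grad : ∀ z, HasGradientAt (fun z => φ z - ⟪g y, z⟫) (g z - g y) z := by
    intro z
    rw [hasGradientAt_iff_hasFDerivAt, map_sub]
    exact (hg z).hasFDerivAt.sub (InnerProductSpace.toDual ℝ E (g y)).hasFDerivAt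
  have htilt_lip : ∀ a b, ‖(g a - g y) - (g b - g y)‖ ≤ C * ‖a - b‖ := by
    simpa only [sub_sub_sub_cancel_right] using hlip
  have htilt_min : ∀ b, φ y - ⟪g y, y⟫ ≤ φ b - ⟪g y, b⟫ := by
    intro b
    linarith [hconv y b, (inner_sub_right (g y) b y : ⟪g y, b - y⟫ = _)]
  have := norm_gradient_sq_le_of_forall_le htilt_grad htilt_lip htilt_min x
  convert this using 2
  rw [inner_sub_right]
  ring

end InnerProductSpace

section FiniteSum

variable {d n : ℕ} {f : Fin n → Euc d → ℝ} {f' : Fin n → Euc d → Euc d} {L : Fin n → ℝ}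

theorem hasGradientAt_avgF (hgrad : ∀ i x, HasGradientAt (f i) (f' i x) x) (x : Euc d) :
    HasGradientAt (avgF n f) (avgG n f' x) x := by
  rw [hasGradientAt_iff_hasFDerivAt, avgG, map_smul, map_sum]
  exact (HasFDerivAt.fun_sum fun i _ => (hgrad i x).hasFDerivAt).const_mul (1 / (n : ℝ))

theorem avgG_sub_avgG (x w : Euc d) :
    avgG n f' x - avgG n f' w = (1 / (n : ℝ)) • ∑ i, (f' i x - f' i w) := by
  rw [avgG, avgG, ← smul_sub, sum_sub_distrib]

theorem Lbar_nonneg (hLpos : ∀ i, 0 < L i) : 0 ≤ Lbar n L :=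
  mul_nonneg (by positivity) (sum_nonneg fun i _ => (hLpos i).le)

theorem Ve_pIS (x w : Euc d) :
    Ve n f' (pIS n L) x w = Lbar n L * (1 / (n : ℝ) * ∑ i, 1 / L i * ‖f' i x - f' i w‖ ^ 2) := by
  rcases Nat.eq_zero_or_pos n with rfl | hn
  · simp [Ve]
  simp only [Ve, pIS, one_div_div, mul_sum]
  refine sum_congr rfl fun i _ => ?_
  field_simp

theorem Ve_pIS_le (hLpos : ∀ i, 0 < L i) (xstar x w : Euc d) :
    Ve n f' (pIS n L) x w ≤
      2 * Lbar n L * (1 / (n : ℝ) * ∑ i, 1 / L i * ‖f' i x - f' i xstar‖ ^ 2) +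
        2 * Lbar n L * Dfun n f' L xstar w := by
  have hterm : ∀ i, 1 / L i * ‖f' i x - f' i w‖ ^ 2 ≤
      2 * (1 / L i * ‖f' i x - f' i xstar‖ ^ 2) + 2 * (1 / L i * ‖f' i w - f' i xstar‖ ^ 2) := by
    intro i
    have htri : ‖f' i x - f' i w‖ ≤ ‖f' i x - f' i xstar‖ + ‖f' i w - f' i xstar‖ := by
      simpa only [norm_sub_rev (f' i xstar)] using
        norm_sub_le_norm_sub_add_norm_sub _ (f' i xstar) _
    have hsq := (pow_le_pow_left₀ (norm_nonneg _) htri 2).trans (add_sq_le ..)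
    have := mul_le_mul_of_nonneg_left hsq (one_div_pos.2 (hLpos i)).le
    linarith
  have hsum : 1 / (n : ℝ) * ∑ i, 1 / L i * ‖f' i x - f' i w‖ ^ 2 ≤
      2 * (1 / (n : ℝ) * ∑ i, 1 / L i * ‖f' i x - f' i xstar‖ ^ 2) + 2 * Dfun n f' L xstar w := by
    calc _ ≤ 1 / (n : ℝ) * ∑ i, (2 * (1 / L i * ‖f' i x - f' i xstar‖ ^ 2) +
          2 * (1 / L i * ‖f' i w - f' i xstar‖ ^ 2)) :=
          mul_le_mul_of_nonneg_left (sum_le_sum fun i _ => hterm i) (by positivity)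
      _ = _ := by rw [Dfun, sum_add_distrib, ← mul_sum, ← mul_sum]; ring
  rw [Ve_pIS]
  linarith [mul_le_mul_of_nonneg_left hsum (Lbar_nonneg hLpos)]

theorem avg_inv_mul_norm_sub_gradient_sq_le
    (hgrad : ∀ i x, HasGradientAt (f i) (f' i x) x)
    (hconv : ∀ i x y, f i x + ⟪f' i x, y - x⟫ ≤ f i y) (hLpos : ∀ i, 0 < L i)
    (hsmooth : ∀ i x y, ‖f' i x - f' i y‖ ≤ L i * ‖x - y‖)
    {xstar : Euc d} (hG0 : avgG n f' xstar = 0) (x : Euc d) :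
    1 / (n : ℝ) * ∑ i, 1 / L i * ‖f' i x - f' i xstar‖ ^ 2 ≤
      2 * (avgF n f x - avgF n f xstar) := by
  have hterm : ∀ i, 1 / L i * ‖f' i x - f' i xstar‖ ^ 2 ≤
      2 * (f i x - f i xstar - ⟪f' i xstar, x - xstar⟫) := by
    intro i
    calc _ ≤ 1 / L i * (2 * L i * (f i x - f i xstar - ⟪f' i xstar, x - xstar⟫)) := by
          gcongr
          · exact (one_div_pos.2 (hLpos i)).le
          · exact norm_sub_gradient_sq_le_of_convex (hgrad i) (hconv i) (hsmooth i) x xstar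
      _ = _ := by field_simp [(hLpos i).ne']
  have hcross : 1 / (n : ℝ) * ∑ i, ⟪f' i xstar, x - xstar⟫ = ⟪avgG n f' xstar, x - xstar⟫ := by
    rw [avgG, real_inner_smul_left, sum_inner]
  calc _ ≤ 1 / (n : ℝ) * ∑ i, 2 * (f i x - f i xstar - ⟪f' i xstar, x - xstar⟫) :=
        mul_le_mul_of_nonneg_left (sum_le_sum fun i _ => hterm i) (by positivity)
    _ = 2 * (avgF n f x - avgF n f xstar) - 2 * ⟪avgG n f' xstar, x - xstar⟫ := by
        rw [← hcross, avgF, avgF, ← mul_sum, sum_sub_distrib, sum_sub_distrib]; ring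
    _ = _ := by rw [hG0, inner_zero_left, mul_zero, sub_zero]

end FiniteSum

theorem as_lsvrg_second_moment_bound_general (d n : ℕ)
    (f : Fin n → Euc d → ℝ) (f' : Fin n → Euc d → Euc d) (L : Fin n → ℝ) (LF : ℝ)
    (hgrad : ∀ i x, HasGradientAt (f i) (f' i x) x)
    (hconv : ∀ i x y, f i x + ⟪f' i x, y - x⟫ ≤ f i y)
    (hLpos : ∀ i, 0 < L i)
    (hsmooth : ∀ i x y, ‖f' i x - f' i y‖ ≤ L i * ‖x - y‖)
    (hLF : ∀ x y, ‖avgG n f' x - avgG n f' y‖ ≤ LF * ‖x - y‖)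
    (xstar : Euc d) (hmin : ∀ y, avgF n f xstar ≤ avgF n f y)
    (p : Fin n → ℝ) (hp : ∀ i, 0 < p i) (hp1 : ∑ i, p i = 1)
    (x w : Euc d)
    (g : Fin n → Euc d)
    (hg : ∀ i, g i = (1 / ((n : ℝ) * p i)) • (f' i x - f' i w) + avgG n f' w) :
    ∑ i, p i * ‖g i‖ ^ 2 ≤
      4 * Lbar n L * (avgF n f x - avgF n f xstar) +
      2 * LF * (avgF n f x - avgF n f xstar) +
      2 * Lbar n L * Dfun n f' L xstar w +
      Ve n f' p x w - Ve n f' (pIS n L) x w := by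
  have hFgrad := hasGradientAt_avgF hgrad
  have hG0 : avgG n f' xstar = 0 :=
    IsLocalMin.hasGradientAt_eq_zero (Filter.Eventually.of_forall hmin) (hFgrad xstar)
  have hsecond : ∑ i, p i * ‖g i‖ ^ 2 =
      Ve n f' p x w + ‖avgG n f' x‖ ^ 2 - ‖avgG n f' x - avgG n f' w‖ ^ 2 := by
    have hpyth := norm_add_sq_real (avgG n f' x - avgG n f' w) (avgG n f' w)
    rw [sub_add_cancel] at hpyth
    simp only [hg]
    rw [sum_mul_norm_sq_inv_mul_smul_add (n : ℝ) (fun i => (hp i).ne') hp1, ← avgG_sub_avgG,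
      hpyth, Ve]
    ring
  have hgradF := norm_gradient_sq_le_of_forall_le hFgrad hLF hmin x
  have hbregman := avg_inv_mul_norm_sub_gradient_sq_le hgrad hconv hLpos hsmooth hG0 x
  have hIS := Ve_pIS_le (f' := f') hLpos xstar x w
  linarith [mul_le_mul_of_nonneg_left hbregman (Lbar_nonneg hLpos),
    sq_nonneg ‖avgG n f' x - avgG n f' w‖]

/-- second-moment bound for the AS-LSVRG stochastic gradient. -/
theorem as_lsvrg_second_moment_bound (d n : ℕ) (hd : 0 < d) (hn : 0 < n)
    (f : Fin n → Euc d → ℝ) (f' : Fin n → Euc d → Euc d) (L : Fin n → ℝ) (LF : ℝ)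
    (hgrad : ∀ i x, HasGradientAt (f i) (f' i x) x)
    (hconv : ∀ i x y, f i x + ⟪f' i x, y - x⟫ ≤ f i y)
    (hLpos : ∀ i, 0 < L i)
    (hsmooth : ∀ i x y, ‖f' i x - f' i y‖ ≤ L i * ‖x - y‖)
    (hLF : ∀ x y, ‖avgG n f' x - avgG n f' y‖ ≤ LF * ‖x - y‖)
    (xstar : Euc d) (hmin : ∀ y, avgF n f xstar ≤ avgF n f y)
    (p : Fin n → ℝ) (hp : ∀ i, 0 < p i) (hp1 : ∑ i, p i = 1)
    (x w : Euc d)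
    (g : Fin n → Euc d)
    (hg : ∀ i, g i = (1 / ((n : ℝ) * p i)) • (f' i x - f' i w) + avgG n f' w) :
    ∑ i, p i * ‖g i‖ ^ 2 ≤
      4 * Lbar n L * (avgF n f x - avgF n f xstar) +
      2 * LF * (avgF n f x - avgF n f xstar) +
      2 * Lbar n L * Dfun n f' L xstar w +
      Ve n f' p x w - Ve n f' (pIS n L) x w :=
  as_lsvrg_second_moment_bound_general d n f f' L LF hgrad hconv hLpos hsmooth hLF xstar hmin p hp
    hp1 x w g hg
end

section
/- Suppose each f_i is convex and L_i-smooth and F is μ-strongly convex with μ > 0 and minimizer x*. Let ρ ∈ (0,1], θ₂ = 1/2, 0 < θ₁ ≤ 1/2, κ = μ/L̄, η = θ₂/((1 + θ₂)θ₁), and α₂ = max{1/(1 + ηκ), 1 − θ₁/2, 1 − ρθ₁/(1 + θ₁)}. Let z, w, v ∈ ℝ^d, x = θ₁z + θ₂w + (1 − θ₁ − θ₂)v, and for a probability vector p with positive entries set g_i = (1/(n p_i))(∇f_i(x) − ∇f_i(w)) + ∇F(w), z'_i = (1/(1 + ηκ))(ηκ·x + z − (η/L̄)g_i), v'_i = x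 + θ₁(z'_i − z). With Z(u) = (L̄(1 + ηκ)/(2η))‖u − x*‖², V(u) = (1/θ₁)(F(u) − F(x*)), and W(u) = (θ₂(1 + θ₁)/(ρθ₁))(F(u) − F(x*)), the one-step AS-LKatyusha inequality holds: ∑_{i=1}^n p_i (Z(z'_i) + V(v'_i)) + (1 − ρ)·W(w) + ρ·W(v) ≤ α₂(Z(z) + V(v) + W(w)) + (1/(4L̄θ₁))(V_e(p; x, w) − V_e(p^IS; x, w)). -/
open MeasureTheory Finset
open scoped RealInnerProductSpace BigOperators

/-!
The step `z ↦ z'ᵢ` is a proximal step: `gᵢ = μ (x - z'ᵢ) + (L̄ / η) (z - z'ᵢ)`, so the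
three-point identity turns `⟪gᵢ, z'ᵢ - x*⟫` into a telescoping difference of the distances in
`Z`. The smoothness upper bound at `x`, together with Young's inequality, controls `F(v'ᵢ)` by
this linear model up to `‖∇F(x) - gᵢ‖² / (4L̄)`; the choice `η = 1 / (3θ₁)` makes the leftover
`‖z'ᵢ - z‖²` terms cancel.
Averaging with the weights `pᵢ` makes `gᵢ` unbiased, and its variance is at most `V_e(p)`, while
cocoercivity of each `∇fᵢ` bounds `V_e(p^IS)` by `2L̄` times the Bregman divergence `D_F(x, w)`.
That divergence is exactly absorbed by the `θ₂`-share of `x = θ₁z + θ₂w + (1 - θ₁ - θ₂)v` once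
strong convexity at `x` and convexity towards `v` are applied.
-/

section Bregman

variable {E : Type*} [NormedAddCommGroup E] [InnerProductSpace ℝ E]

noncomputable def bregman (f : E → ℝ) (f' : E → E) (x y : E) : ℝ := f y - f x - ⟪f' x, y - x⟫

variable [CompleteSpace E] {f : E → ℝ} {f' : E → E} {L : ℝ}

theorem bregman_le_of_lipschitz_gradient (hgrad : ∀ x, HasGradientAt f (f' x) x)
    (hsmooth : ∀ x y, ‖f' x - f' y‖ ≤ L * ‖x - y‖) (x y : E) :
    bregman f f' x y ≤ L / 2 * ‖y - x‖ ^ 2 := by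
  set φ : ℝ → ℝ := fun t =>
    f (x + t • (y - x)) - t * ⟪f' x, y - x⟫ - L / 2 * t ^ 2 * ‖y - x‖ ^ 2
  have hφ : ∀ t, HasDerivAt φ
      (⟪f' (x + t • (y - x)), y - x⟫ - ⟪f' x, y - x⟫ - L * t * ‖y - x‖ ^ 2) t := by
    intro t
    have hline : HasDerivAt (fun s : ℝ => x + s • (y - x)) (y - x) t := by
      simpa using ((hasDerivAt_id t).smul_const (y - x)).const_add x
    have h1 := (hgrad _).hasFDerivAt.comp_hasDerivAt t hline
    have h := (h1.sub ((hasDerivAt_id t).mul_const ⟪f' x, y - x⟫)).sub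
      (((hasDerivAt_pow 2 t).const_mul (L / 2)).mul_const (‖y - x‖ ^ 2))
    refine h.congr_deriv ?_
    simp only [InnerProductSpace.toDual_apply_apply]
    ring
  have hanti : AntitoneOn φ (Set.Icc 0 1) :=
    antitoneOn_of_hasDerivWithinAt_nonpos (convex_Icc 0 1)
      (fun t _ => (hφ t).continuousAt.continuousWithinAt)
      (fun t _ => (hφ t).hasDerivWithinAt)
      (fun t ht => by
        rw [interior_Icc] at ht
        have hcs : ⟪f' (x + t • (y - x)) - f' x, y - x⟫ ≤ L * t * ‖y - x‖ ^ 2 :=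
          calc _ ≤ ‖f' (x + t • (y - x)) - f' x‖ * ‖y - x‖ := real_inner_le_norm _ _
            _ ≤ L * ‖t • (y - x)‖ * ‖y - x‖ := by
                gcongr; simpa using hsmooth (x + t • (y - x)) x
            _ = L * t * ‖y - x‖ ^ 2 := by
                rw [norm_smul, Real.norm_of_nonneg ht.1.le]; ring
        rw [inner_sub_left] at hcs
        linarith)
  have h01 := hanti (by simp) (by simp) zero_le_one
  simp only [φ, one_smul, add_sub_cancel, one_mul, one_pow, mul_one, zero_smul, add_zero,
    zero_mul, sub_zero, ne_eq, OfNat.ofNat_ne_zero, not_false_eq_true, zero_pow, mul_zero] at h01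
  rw [bregman]
  linarith

theorem sq_norm_sub_le_bregman_of_convex (hgrad : ∀ x, HasGradientAt f (f' x) x)
    (hconv : ∀ x y, 0 ≤ bregman f f' x y) (hL : 0 < L)
    (hsmooth : ∀ x y, ‖f' x - f' y‖ ≤ L * ‖x - y‖) (x y : E) :
    ‖f' x - f' y‖ ^ 2 ≤ 2 * L * bregman f f' x y := by
  -- compare `f (y - (f' y - f' x) / L)` from below (convexity at `x`) and above (descent at `y`)
  set D := f' y - f' x
  have hlow := hconv x (y - (1 / L) • D)
  have hup := bregman_le_of_lipschitz_gradient hgrad hsmooth y (y - (1 / L) • D)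
  have hD : ⟪f' y, D⟫ - ⟪f' x, D⟫ = ‖f' x - f' y‖ ^ 2 := by
    rw [← inner_sub_left, real_inner_self_eq_norm_sq, norm_sub_rev]
  rw [bregman, show y - (1 / L) • D - x = (y - x) - (1 / L) • D by abel, inner_sub_right,
    real_inner_smul_right] at hlow
  rw [bregman, sub_sub_cancel_left, inner_neg_right, real_inner_smul_right, norm_neg,
    norm_smul, Real.norm_of_nonneg (one_div_pos.mpr hL).le, norm_sub_rev (f' y)] at hup
  rw [bregman]
  field_simp at hlow hup ⊢
  nlinarith

end Bregman

section InnerProductSpace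

variable {E : Type*} [NormedAddCommGroup E] [InnerProductSpace ℝ E]

theorem real_inner_three_point (p q r : E) :
    ⟪p - q, q - r⟫ = (‖p - r‖ ^ 2 - ‖p - q‖ ^ 2 - ‖q - r‖ ^ 2) / 2 := by
  have h := norm_add_sq_real (p - q) (q - r)
  rw [sub_add_sub_cancel] at h
  linarith

theorem prox_three_point {a b : ℝ} (ha : 0 ≤ a) {g x z z' : E}
    (hg : g = a • (x - z') + b • (z - z')) (u : E) :
    ⟪g, z' - u⟫ + (a + b) / 2 * ‖z' - u‖ ^ 2 + b / 2 * ‖z' - z‖ ^ 2 ≤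
      a / 2 * ‖x - u‖ ^ 2 + b / 2 * ‖z - u‖ ^ 2 := by
  rw [hg, inner_add_left, real_inner_smul_left, real_inner_smul_left, real_inner_three_point,
    real_inner_three_point, norm_sub_rev z z']
  nlinarith [mul_nonneg ha (sq_nonneg ‖x - z'‖)]

theorem inner_le_div_add_mul_sq {L : ℝ} (hL : 0 < L) (θ : ℝ) (a b : E) :
    θ * ⟪a, b⟫ ≤ 1 / (4 * L) * ‖a‖ ^ 2 + L * θ ^ 2 * ‖b‖ ^ 2 := by
  have h := norm_sub_sq_real a ((2 * L * θ) • b)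
  rw [real_inner_smul_right, norm_smul, Real.norm_eq_abs, mul_pow, sq_abs] at h
  have hsq : 0 ≤ ‖a - (2 * L * θ) • b‖ ^ 2 := sq_nonneg _
  rw [div_mul_eq_mul_div, one_mul, div_add' _ _ _ (by positivity), le_div_iff₀ (by positivity)]
  nlinarith

theorem descent_step_le {F : E → ℝ} {F' : E → E} {L μ θ : ℝ} (hL : 0 < L) (hμ : 0 ≤ μ)
    (hθ : 0 < θ) {x z z' g : E} (hdesc : ∀ y, bregman F F' x y ≤ L / 2 * ‖y - x‖ ^ 2)
    (hg : g = μ • (x - z') + (3 * θ * L) • (z - z')) (u : E) :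
    F (x + θ • (z' - z)) + θ * ((3 * θ * L + μ) / 2) * ‖z' - u‖ ^ 2 ≤
      F x + θ * ⟪g, u - z⟫ + θ * (μ / 2) * ‖x - u‖ ^ 2 + 3 / 2 * θ ^ 2 * L * ‖z - u‖ ^ 2 +
        1 / (4 * L) * ‖F' x - g‖ ^ 2 := by
  have hF : F (x + θ • (z' - z)) ≤ F x + θ * ⟪F' x, z' - z⟫ + L / 2 * θ ^ 2 * ‖z' - z‖ ^ 2 := by
    have h := hdesc (x + θ • (z' - z))
    rw [bregman, add_sub_cancel_left, real_inner_smul_right, norm_smul,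
      Real.norm_of_nonneg hθ.le] at h
    linarith
  have hsplit : ⟪F' x, z' - z⟫ = ⟪F' x - g, z' - z⟫ + ⟪g, z' - u⟫ + ⟪g, u - z⟫ := by
    rw [add_assoc, ← inner_add_right, sub_add_sub_cancel, ← inner_add_left, sub_add_cancel]
  have hyoung := inner_le_div_add_mul_sq hL θ (F' x - g) (z' - z)
  have hprox := mul_le_mul_of_nonneg_left (prox_three_point hμ hg u) hθ.le
  rw [hsplit] at hF
  linarith

theorem grad_eq_of_prox_step {η κ L : ℝ} (hη : 0 < η) (hL : 0 < L) (hκ : 0 ≤ κ) {g x z z' : E}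
    (h : z' = (1 / (1 + η * κ)) • (η • κ • x + z - (η / L) • g)) :
    g = (L * κ) • (x - z') + (L / η) • (z - z') := by
  have h' : (1 + η * κ) • z' = η • κ • x + z - (η / L) • g := by
    rw [h, smul_smul, mul_one_div_cancel (by positivity), one_smul]
  have hg : g = (L / η) • (η • κ • x + z - (1 + η * κ) • z') := by
    rw [h', sub_sub_cancel, smul_smul, div_mul_div_cancel₀ hη.ne', div_self hL.ne', one_smul]
  rw [hg]
  linear_combination (norm := module) (div_mul_cancel₀ L hη.ne') • (κ • x - κ • z')

theorem coupling_le {F : E → ℝ} {F' : E → E} {μ θ₁ θ₂ : ℝ} (hθ₁ : 0 ≤ θ₁) (hθ : θ₁ + θ₂ ≤ 1)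
    {x z w v u : E} (hx : x = θ₁ • z + θ₂ • w + (1 - θ₁ - θ₂) • v)
    (hsc : μ / 2 * ‖u - x‖ ^ 2 ≤ bregman F F' x u) (hv : 0 ≤ bregman F F' x v) :
    θ₁ * ⟪F' x, u - z⟫ + θ₁ * (μ / 2) * ‖x - u‖ ^ 2 + θ₂ * bregman F F' x w ≤
      θ₁ * (F u - F x) + θ₂ * (F w - F x) + (1 - θ₁ - θ₂) * (F v - F x) := by
  have hsplit : θ₁ • (u - z) = θ₁ • (u - x) + θ₂ • (w - x) + (1 - θ₁ - θ₂) • (v - x) := by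
    rw [hx]; module
  have hinner := congrArg (⟪F' x, ·⟫) hsplit
  simp only [inner_add_right, real_inner_smul_right] at hinner
  rw [bregman] at hsc hv ⊢
  rw [norm_sub_rev x u]
  linarith [mul_le_mul_of_nonneg_left hsc hθ₁,
    mul_le_mul_of_nonneg_left hv (by linarith : 0 ≤ 1 - θ₁ - θ₂)]

end InnerProductSpace

theorem potential_contraction {θ ρ α q L Zz Dv Dw S X : ℝ} (hθ : 0 < θ) (hρ : 0 < ρ)
    (hZz : 0 ≤ Zz) (hDv : 0 ≤ Dv) (hDw : 0 ≤ Dw) (hq : q ≤ α) (hα₁ : 1 - θ / 2 ≤ α)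
    (hα₂ : 1 - ρ * θ / (1 + θ) ≤ α)
    (hS : θ * S ≤ 1 / 2 * Dw + (1 - θ - 1 / 2) * Dv + θ * (q * Zz) + 1 / (4 * L) * X) :
    S + (1 - ρ) * (1 / 2 * (1 + θ) / (ρ * θ) * Dw) + ρ * (1 / 2 * (1 + θ) / (ρ * θ) * Dv) ≤
      α * (Zz + 1 / θ * Dv + 1 / 2 * (1 + θ) / (ρ * θ) * Dw) + 1 / (4 * L * θ) * X := by
  have hw : (1 + θ - ρ * θ) / (2 * ρ) * Dw ≤ α * (1 + θ) / (2 * ρ) * Dw := by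
    have := mul_le_mul_of_nonneg_right hα₂ (by positivity : 0 ≤ 1 + θ)
    rw [sub_mul, div_mul_cancel₀ _ (by positivity), one_mul] at this
    gcongr
  have hlhs : θ * (S + (1 - ρ) * (1 / 2 * (1 + θ) / (ρ * θ) * Dw) +
      ρ * (1 / 2 * (1 + θ) / (ρ * θ) * Dv)) =
      θ * S + ((1 + θ - ρ * θ) / (2 * ρ) - 1 / 2) * Dw + (1 + θ) / 2 * Dv := by
    field_simp; ring
  have hrhs : θ * (α * (Zz + 1 / θ * Dv + 1 / 2 * (1 + θ) / (ρ * θ) * Dw) +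
      1 / (4 * L * θ) * X) =
      θ * (α * Zz) + α * Dv + α * (1 + θ) / (2 * ρ) * Dw + 1 / (4 * L) * X := by
    field_simp
  refine le_of_mul_le_mul_left ?_ hθ
  rw [hlhs, hrhs]
  linarith [mul_le_mul_of_nonneg_left (mul_le_mul_of_nonneg_right hq hZz) hθ.le,
    mul_le_mul_of_nonneg_right hα₁ hDv]

theorem sum_mul_sq_norm_sub_sum_smul_le {E ι : Type*} [NormedAddCommGroup E]
    [InnerProductSpace ℝ E] [Fintype ι] {p : ι → ℝ} (hp : ∑ i, p i = 1) (X : ι → E) :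
    ∑ i, p i * ‖X i - ∑ j, p j • X j‖ ^ 2 ≤ ∑ i, p i * ‖X i‖ ^ 2 := by
  set m := ∑ j, p j • X j
  have hcross : ∑ i, p i * ⟪X i, m⟫ = ‖m‖ ^ 2 := by
    simp only [← real_inner_smul_left, ← sum_inner, real_inner_self_eq_norm_sq, m]
  have hexpand : ∑ i, p i * ‖X i - m‖ ^ 2 = ∑ i, p i * ‖X i‖ ^ 2 - ‖m‖ ^ 2 := by
    simp only [norm_sub_sq_real, mul_add, mul_sub, sum_add_distrib, sum_sub_distrib, ← sum_mul,
      hp, mul_left_comm _ (2 : ℝ), ← mul_sum, hcross]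
    ring
  linarith [sq_nonneg ‖m‖]

section FiniteSum

variable {d n : ℕ} {f : Fin n → Euc d → ℝ} {f' : Fin n → Euc d → Euc d} {L : Fin n → ℝ}

noncomputable def vrGrad (n : ℕ) (f' : Fin n → Euc d → Euc d) (p : Fin n → ℝ) (x w : Euc d)
    (i : Fin n) : Euc d :=
  (1 / ((n : ℝ) * p i)) • (f' i x - f' i w) + avgG n f' w

theorem sum_smul_vrGrad {p : Fin n → ℝ} (hp : ∀ i, p i ≠ 0) (hp1 : ∑ i, p i = 1) (x w : Euc d) :
    ∑ i, p i • vrGrad n f' p x w i = avgG n f' x := by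
  have hterm : ∀ i, p i • vrGrad n f' p x w i =
      (1 / (n : ℝ)) • (f' i x - f' i w) + p i • avgG n f' w := by
    intro i
    rw [vrGrad, smul_add, smul_smul]
    congr 2
    field_simp [hp i]
  simp only [hterm, sum_add_distrib, ← smul_sum, ← sum_smul, hp1, one_smul, sum_sub_distrib, avgG,
    smul_sub]
  abel

theorem sum_mul_sq_norm_avgG_sub_vrGrad_le {p : Fin n → ℝ} (hp : ∀ i, p i ≠ 0)
    (hp1 : ∑ i, p i = 1) (x w : Euc d) :
    ∑ i, p i * ‖avgG n f' x - vrGrad n f' p x w i‖ ^ 2 ≤ Ve n f' p x w := by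
  set X := fun i => vrGrad n f' p x w i - avgG n f' w
  have hmean : ∑ j, p j • X j = avgG n f' x - avgG n f' w := by
    simp only [X, smul_sub, sum_sub_distrib, ← sum_smul, hp1, one_smul, sum_smul_vrGrad hp hp1]
  have hsecond : ∑ i, p i * ‖X i‖ ^ 2 = Ve n f' p x w := by
    simp only [X, vrGrad, add_sub_cancel_right, Ve, mul_sum, norm_smul, Real.norm_eq_abs, mul_pow,
      sq_abs]
    refine sum_congr rfl fun i _ => ?_
    field_simp [hp i]
  have h := sum_mul_sq_norm_sub_sum_smul_le hp1 X
  rw [hmean, hsecond] at h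
  simpa only [X, sub_sub_sub_cancel_right, norm_sub_rev] using h

theorem Lbar_pos (hn : 0 < n) (hLpos : ∀ i, 0 < L i) : 0 < Lbar n L := by
  have : Nonempty (Fin n) := ⟨⟨0, hn⟩⟩
  exact mul_pos (by positivity) (sum_pos (fun i _ => hLpos i) univ_nonempty)

theorem bregman_avgF (x y : Euc d) :
    bregman (avgF n f) (avgG n f') x y = 1 / (n : ℝ) * ∑ i, bregman (f i) (f' i) x y := by
  simp only [bregman, avgF, avgG, real_inner_smul_left, sum_inner, sum_sub_distrib]
  ring

theorem bregman_avgF_le (hgrad : ∀ i x, HasGradientAt (f i) (f' i x) x)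
    (hsmooth : ∀ i x y, ‖f' i x - f' i y‖ ≤ L i * ‖x - y‖) (x y : Euc d) :
    bregman (avgF n f) (avgG n f') x y ≤ Lbar n L / 2 * ‖y - x‖ ^ 2 := by
  rw [bregman_avgF, Lbar]
  calc 1 / (n : ℝ) * ∑ i, bregman (f i) (f' i) x y
      ≤ 1 / (n : ℝ) * ∑ i, L i / 2 * ‖y - x‖ ^ 2 := by
        gcongr with i
        exact bregman_le_of_lipschitz_gradient (hgrad i) (hsmooth i) x y
    _ = _ := by rw [← sum_mul, ← sum_div]; ring

theorem Ve_pIS_le_s17 (hn : 0 < n) (hgrad : ∀ i x, HasGradientAt (f i) (f' i x) x)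
    (hconv : ∀ i x y, f i x + ⟪f' i x, y - x⟫ ≤ f i y) (hLpos : ∀ i, 0 < L i)
    (hsmooth : ∀ i x y, ‖f' i x - f' i y‖ ≤ L i * ‖x - y‖) (x w : Euc d) :
    Ve n f' (pIS n L) x w ≤ 2 * Lbar n L * bregman (avgF n f) (avgG n f') x w := by
  have hL := Lbar_pos hn hLpos
  rw [Ve, bregman_avgF, mul_sum, mul_sum, mul_sum]
  refine sum_le_sum fun i _ => ?_
  have hcoco := sq_norm_sub_le_bregman_of_convex (hgrad i)
    (fun a b => by rw [bregman]; linarith [hconv i a b]) (hLpos i) (hsmooth i) x w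
  calc 1 / (n : ℝ) ^ 2 * (1 / pIS n L i * ‖f' i x - f' i w‖ ^ 2)
      = Lbar n L / (n * L i) * ‖f' i x - f' i w‖ ^ 2 := by
        rw [pIS, one_div_div]; field_simp
    _ ≤ Lbar n L / (n * L i) * (2 * L i * bregman (f i) (f' i) x w) := by
        have := hLpos i
        gcongr
    _ = 2 * Lbar n L * (1 / n * bregman (f i) (f' i) x w) := by
        field_simp [(hLpos i).ne']

end FiniteSum

section Step

variable {d n : ℕ} {f : Fin n → Euc d → ℝ} {f' : Fin n → Euc d → Euc d} {L : Fin n → ℝ}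
  {μ θ : ℝ} {x z w : Euc d} {p : Fin n → ℝ} {z' : Fin n → Euc d}

theorem sum_mul_descent_step_le (hn : 0 < n) (hgrad : ∀ i x, HasGradientAt (f i) (f' i x) x)
    (hconv : ∀ i x y, f i x + ⟪f' i x, y - x⟫ ≤ f i y) (hLpos : ∀ i, 0 < L i)
    (hsmooth : ∀ i x y, ‖f' i x - f' i y‖ ≤ L i * ‖x - y‖) (hμ : 0 ≤ μ) (hθ : 0 < θ)
    (hp : ∀ i, 0 < p i) (hp1 : ∑ i, p i = 1)
    (hz' : ∀ i, vrGrad n f' p x w i = μ • (x - z' i) + (3 * θ * Lbar n L) • (z - z' i))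
    (u : Euc d) :
    ∑ i, p i * (avgF n f (x + θ • (z' i - z)) + θ * ((3 * θ * Lbar n L + μ) / 2) * ‖z' i - u‖ ^ 2) ≤
      avgF n f x + θ * ⟪avgG n f' x, u - z⟫ + θ * (μ / 2) * ‖x - u‖ ^ 2 +
        3 / 2 * θ ^ 2 * Lbar n L * ‖z - u‖ ^ 2 +
        1 / (4 * Lbar n L) * (Ve n f' p x w - Ve n f' (pIS n L) x w) +
        1 / 2 * bregman (avgF n f) (avgG n f') x w := by
  have hL := Lbar_pos hn hLpos
  have hp0 : ∀ i, p i ≠ 0 := fun i => (hp i).ne'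
  set g := vrGrad n f' p x w
  have hstep := fun i => descent_step_le hL hμ hθ (bregman_avgF_le hgrad hsmooth x) (hz' i) u
  have hsum := sum_le_sum fun i (_ : i ∈ univ) => mul_le_mul_of_nonneg_left (hstep i) (hp i).le
  have hmean : ∑ i, p i * (avgF n f x + θ * ⟪g i, u - z⟫ + θ * (μ / 2) * ‖x - u‖ ^ 2 +
        3 / 2 * θ ^ 2 * Lbar n L * ‖z - u‖ ^ 2 + 1 / (4 * Lbar n L) * ‖avgG n f' x - g i‖ ^ 2) =
      avgF n f x + θ * ⟪avgG n f' x, u - z⟫ + θ * (μ / 2) * ‖x - u‖ ^ 2 +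
        3 / 2 * θ ^ 2 * Lbar n L * ‖z - u‖ ^ 2 +
        1 / (4 * Lbar n L) * ∑ i, p i * ‖avgG n f' x - g i‖ ^ 2 := by
    have hinner : ∑ i, p i * ⟪g i, u - z⟫ = ⟪avgG n f' x, u - z⟫ := by
      simp only [← sum_smul_vrGrad hp0 hp1 x w, sum_inner, real_inner_smul_left, g]
    simp only [mul_add, sum_add_distrib, ← sum_mul, hp1, one_mul, mul_left_comm (p _), ← mul_sum,
      hinner]
  have hvar : 1 / (4 * Lbar n L) * ∑ i, p i * ‖avgG n f' x - g i‖ ^ 2 ≤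
      1 / (4 * Lbar n L) * (Ve n f' p x w - Ve n f' (pIS n L) x w) +
        1 / 2 * bregman (avgF n f) (avgG n f') x w := by
    have hIS := Ve_pIS_le_s17 hn hgrad hconv hLpos hsmooth x w
    calc _ ≤ 1 / (4 * Lbar n L) * Ve n f' p x w := by
          gcongr; exact sum_mul_sq_norm_avgG_sub_vrGrad_le hp0 hp1 x w
      _ ≤ 1 / (4 * Lbar n L) * (Ve n f' p x w - Ve n f' (pIS n L) x w) +
          1 / (4 * Lbar n L) * (2 * Lbar n L * bregman (avgF n f) (avgG n f') x w) := by
          rw [← mul_add]; gcongr; linarith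
      _ = _ := by field_simp; ring
  linarith

theorem potential_step_le (hn : 0 < n) (hgrad : ∀ i x, HasGradientAt (f i) (f' i x) x)
    (hconv : ∀ i x y, f i x + ⟪f' i x, y - x⟫ ≤ f i y) (hLpos : ∀ i, 0 < L i)
    (hsmooth : ∀ i x y, ‖f' i x - f' i y‖ ≤ L i * ‖x - y‖) (hμ : 0 ≤ μ) (hθ : 0 < θ)
    (hθ' : θ ≤ 1 / 2) {v u : Euc d} (hx : x = θ • z + (1 / 2 : ℝ) • w + (1 - θ - 1 / 2) • v)
    (hsc : μ / 2 * ‖u - x‖ ^ 2 ≤ bregman (avgF n f) (avgG n f') x u)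
    (hp : ∀ i, 0 < p i) (hp1 : ∑ i, p i = 1)
    (hz' : ∀ i, vrGrad n f' p x w i = μ • (x - z' i) + (3 * θ * Lbar n L) • (z - z' i)) :
    θ * ∑ i, p i * ((3 * θ * Lbar n L + μ) / 2 * ‖z' i - u‖ ^ 2 +
        1 / θ * (avgF n f (x + θ • (z' i - z)) - avgF n f u)) ≤
      1 / 2 * (avgF n f w - avgF n f u) + (1 - θ - 1 / 2) * (avgF n f v - avgF n f u) +
        θ * (3 / 2 * θ * Lbar n L * ‖z - u‖ ^ 2) +
        1 / (4 * Lbar n L) * (Ve n f' p x w - Ve n f' (pIS n L) x w) := by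
  have hdescent := sum_mul_descent_step_le hn hgrad hconv hLpos hsmooth hμ hθ hp hp1 hz' u
  have hconvF : 0 ≤ bregman (avgF n f) (avgG n f') x v := by
    rw [bregman_avgF]
    exact mul_nonneg (by positivity) (sum_nonneg fun i _ => by rw [bregman]; linarith [hconv i x v])
  have hcouple := coupling_le hθ.le (by linarith) hx hsc hconvF
  have hsum : θ * ∑ i, p i * ((3 * θ * Lbar n L + μ) / 2 * ‖z' i - u‖ ^ 2 +
        1 / θ * (avgF n f (x + θ • (z' i - z)) - avgF n f u)) =
      ∑ i, p i * (avgF n f (x + θ • (z' i - z)) +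
        θ * ((3 * θ * Lbar n L + μ) / 2) * ‖z' i - u‖ ^ 2) - avgF n f u := by
    calc _ = ∑ i, p i * (avgF n f (x + θ • (z' i - z)) +
            θ * ((3 * θ * Lbar n L + μ) / 2) * ‖z' i - u‖ ^ 2) - ∑ i, p i * avgF n f u := by
          rw [mul_sum, ← sum_sub_distrib]
          exact sum_congr rfl fun i _ => by field_simp; ring
      _ = _ := by rw [← sum_mul, hp1, one_mul]
  linarith

end Step

theorem as_lkatyusha_one_step_contraction_general (d n : ℕ) (hn : 0 < n)
    (f : Fin n → Euc d → ℝ) (f' : Fin n → Euc d → Euc d) (L : Fin n → ℝ) (μ : ℝ)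
    (hgrad : ∀ i x, HasGradientAt (f i) (f' i x) x)
    (hconv : ∀ i x y, f i x + ⟪f' i x, y - x⟫ ≤ f i y)
    (hLpos : ∀ i, 0 < L i)
    (hsmooth : ∀ i x y, ‖f' i x - f' i y‖ ≤ L i * ‖x - y‖)
    (hμ : 0 < μ)
    (hsc : ∀ x y : Euc d,
      avgF n f x + ⟪avgG n f' x, y - x⟫ + (μ / 2) * ‖y - x‖ ^ 2 ≤ avgF n f y)
    (xstar : Euc d) (hmin : ∀ y, avgF n f xstar ≤ avgF n f y)
    (ρ θ₁ θ₂ κ η α₂ : ℝ) (hρ0 : 0 < ρ)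
    (hθ₂ : θ₂ = 1 / 2) (hθ₁0 : 0 < θ₁) (hθ₁ : θ₁ ≤ 1 / 2)
    (hκ : κ = μ / Lbar n L) (hη : η = θ₂ / ((1 + θ₂) * θ₁))
    (hα₂ : α₂ = max (max (1 / (1 + η * κ)) (1 - θ₁ / 2)) (1 - ρ * θ₁ / (1 + θ₁)))
    (z w v : Euc d) (x : Euc d)
    (hx : x = θ₁ • z + θ₂ • w + (1 - θ₁ - θ₂) • v)
    (p : Fin n → ℝ) (hp : ∀ i, 0 < p i) (hp1 : ∑ i, p i = 1)
    (g z' v' : Fin n → Euc d)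
    (hg : ∀ i, g i = (1 / ((n : ℝ) * p i)) • (f' i x - f' i w) + avgG n f' w)
    (hz' : ∀ i, z' i = (1 / (1 + η * κ)) • (η • κ • x + z - (η / Lbar n L) • g i))
    (hv' : ∀ i, v' i = x + θ₁ • (z' i - z))
    (Z V W : Euc d → ℝ)
    (hZ : ∀ u, Z u = (Lbar n L * (1 + η * κ) / (2 * η)) * ‖u - xstar‖ ^ 2)
    (hV : ∀ u, V u = (1 / θ₁) * (avgF n f u - avgF n f xstar))
    (hW : ∀ u, W u = (θ₂ * (1 + θ₁) / (ρ * θ₁)) * (avgF n f u - avgF n f xstar)) :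
    ∑ i, p i * (Z (z' i) + V (v' i)) + (1 - ρ) * W w + ρ * W v ≤
      α₂ * (Z z + V v + W w) +
      (1 / (4 * Lbar n L * θ₁)) * (Ve n f' p x w - Ve n f' (pIS n L) x w) := by
  subst hθ₂ hα₂
  have hL := Lbar_pos hn hLpos
  have hη' : η = 1 / (3 * θ₁) := by rw [hη]; field_simp; norm_num
  have hηpos : 0 < η := by rw [hη']; positivity
  have hκpos : 0 < κ := by rw [hκ]; positivity
  have hLκ : Lbar n L * κ = μ := by rw [hκ]; field_simp
  have hLη : Lbar n L / η = 3 * θ₁ * Lbar n L := by rw [hη']; field_simp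
  have hprox : ∀ i, vrGrad n f' p x w i = μ • (x - z' i) + (3 * θ₁ * Lbar n L) • (z - z' i) := by
    intro i
    rw [vrGrad, ← hg i, ← hLκ, ← hLη]
    exact grad_eq_of_prox_step hηpos hL hκpos.le (hz' i)
  have hZc : ∀ u, Z u = (3 * θ₁ * Lbar n L + μ) / 2 * ‖u - xstar‖ ^ 2 := fun u => by
    rw [hZ, ← hLκ, ← hLη]; field_simp
  have hZz : 1 / (1 + η * κ) * Z z = 3 / 2 * θ₁ * Lbar n L * ‖z - xstar‖ ^ 2 := by
    calc 1 / (1 + η * κ) * Z z = Lbar n L / η / 2 * ‖z - xstar‖ ^ 2 := by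
          rw [hZ]; field_simp
      _ = _ := by rw [hLη]; ring
  rw [hV v, hW w, hW v]
  refine potential_contraction hθ₁0 hρ0 (by rw [hZc]; positivity) (by linarith [hmin v])
    (by linarith [hmin w]) (le_max_of_le_left (le_max_left _ _))
    (le_max_of_le_left (le_max_right _ _)) (le_max_right _ _) ?_
  rw [hZz]
  simpa only [hZc, hV, hv'] using potential_step_le hn hgrad hconv hLpos hsmooth hμ.le hθ₁0 hθ₁ hx
    (u := xstar) (by rw [bregman]; linarith [hsc x xstar]) hp hp1 hprox

/-- one-step AS-LKatyusha contraction for the full potential. -/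
theorem as_lkatyusha_one_step_contraction (d n : ℕ) (hd : 0 < d) (hn : 0 < n)
    (f : Fin n → Euc d → ℝ) (f' : Fin n → Euc d → Euc d) (L : Fin n → ℝ) (μ : ℝ)
    (hgrad : ∀ i x, HasGradientAt (f i) (f' i x) x)
    (hconv : ∀ i x y, f i x + ⟪f' i x, y - x⟫ ≤ f i y)
    (hLpos : ∀ i, 0 < L i)
    (hsmooth : ∀ i x y, ‖f' i x - f' i y‖ ≤ L i * ‖x - y‖)
    (hμ : 0 < μ)
    (hsc : ∀ x y : Euc d,
      avgF n f x + ⟪avgG n f' x, y - x⟫ + (μ / 2) * ‖y - x‖ ^ 2 ≤ avgF n f y)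
    (xstar : Euc d) (hmin : ∀ y, avgF n f xstar ≤ avgF n f y)
    (ρ θ₁ θ₂ κ η α₂ : ℝ) (hρ0 : 0 < ρ) (hρ1 : ρ ≤ 1)
    (hθ₂ : θ₂ = 1 / 2) (hθ₁0 : 0 < θ₁) (hθ₁ : θ₁ ≤ 1 / 2)
    (hκ : κ = μ / Lbar n L) (hη : η = θ₂ / ((1 + θ₂) * θ₁))
    (hα₂ : α₂ = max (max (1 / (1 + η * κ)) (1 - θ₁ / 2)) (1 - ρ * θ₁ / (1 + θ₁)))
    (z w v : Euc d) (x : Euc d)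
    (hx : x = θ₁ • z + θ₂ • w + (1 - θ₁ - θ₂) • v)
    (p : Fin n → ℝ) (hp : ∀ i, 0 < p i) (hp1 : ∑ i, p i = 1)
    (g z' v' : Fin n → Euc d)
    (hg : ∀ i, g i = (1 / ((n : ℝ) * p i)) • (f' i x - f' i w) + avgG n f' w)
    (hz' : ∀ i, z' i = (1 / (1 + η * κ)) • (η • κ • x + z - (η / Lbar n L) • g i))
    (hv' : ∀ i, v' i = x + θ₁ • (z' i - z))
    (Z V W : Euc d → ℝ)
    (hZ : ∀ u, Z u = (Lbar n L * (1 + η * κ) / (2 * η)) * ‖u - xstar‖ ^ 2)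
    (hV : ∀ u, V u = (1 / θ₁) * (avgF n f u - avgF n f xstar))
    (hW : ∀ u, W u = (θ₂ * (1 + θ₁) / (ρ * θ₁)) * (avgF n f u - avgF n f xstar)) :
    ∑ i, p i * (Z (z' i) + V (v' i)) + (1 - ρ) * W w + ρ * W v ≤
      α₂ * (Z z + V v + W w) +
      (1 / (4 * Lbar n L * θ₁)) * (Ve n f' p x w - Ve n f' (pIS n L) x w) :=
  as_lkatyusha_one_step_contraction_general d n hn f f' L μ hgrad hconv hLpos hsmooth hμ hsc xstar
    hmin ρ θ₁ θ₂ κ η α₂ hρ0 hθ₂ hθ₁0 hθ₁ hκ hη hα₂ z w v x hx p hp hp1 g z' v' hg hz' hv' Z V W hZ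
    hV hW
end
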